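/- arXiv:2411.11604 — 3 statements merged into one kernel-verified Lean document; each statement's English description precedes it below -/
import Mathlib

section
/- Let α ∈ ℂ. For n ≥ 2 set N_n := ⌊log₂ n⌋ and ε_n := (e · max{2, |α|²} / N_n)^{N_n}. Then for every n ≥ 2 one has e^{−|α|²} · ∑_{j=0}^{N_n} |α|^{2j} / j! ≥ 1 − ε_n, and moreover lim_{n→∞} n · ε_n = 0. -/
/-!
The photon-number distribution of `|α⟩` is Poisson with mean `a = ‖α‖²`, so the missing
weight is the Poisson tail `e^{-a} ∑_{j > N} a^j / j!`. Since `(k + m)! ≥ m! k!`, this tail is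
at most `a^{N+1} / (N+1)!`, and `m! ≥ (m / e)^m` bounds that by `(e a / (N+1))^{N+1} ≤ ε_n`
whenever `ε_n < 1` (otherwise the inequality is trivial). For the limit, `n < 2^{N+1}` gives
`n ε_n ≤ 2 (2 c / N)^N` with `c = e max{2, ‖α‖²}`, and `(c / N)^N ≤ c^N / N! → 0`.
-/

open Filter Finset Real Topology
open scoped Nat

theorem Real.exp_sub_sum_range_le {a : ℝ} (ha : 0 ≤ a) (n : ℕ) :
    exp a - ∑ j ∈ range n, a ^ j / j ! ≤ a ^ n / n ! * exp a := by
  have hexp : HasSum (fun j ↦ a ^ j / j !) (exp a) := by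
    simpa [← exp_eq_exp_ℝ] using NormedSpace.expSeries_div_hasSum_exp a
  refine hasSum_le (fun k ↦ ?_) ((hasSum_nat_add_iff' n).2 hexp) (hexp.mul_left _)
  have hfac : (n ! * k ! : ℝ) ≤ (k + n)! := by
    rw [add_comm]
    exact_mod_cast Nat.le_of_dvd (Nat.factorial_pos _)
      (Nat.factorial_mul_factorial_dvd_factorial_add n k)
  rw [pow_add, div_mul_div_comm, mul_comm (a ^ n)]
  exact div_le_div_of_nonneg_left (by positivity) (by positivity) hfac

theorem Real.one_sub_exp_neg_mul_sum_range_le {a : ℝ} (ha : 0 ≤ a) (n : ℕ) :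
    1 - exp (-a) * ∑ j ∈ range n, a ^ j / j ! ≤ a ^ n / n ! :=
  calc 1 - exp (-a) * ∑ j ∈ range n, a ^ j / j !
      = exp (-a) * (exp a - ∑ j ∈ range n, a ^ j / j !) := by
        rw [mul_sub, ← exp_add, neg_add_cancel, exp_zero]
    _ ≤ exp (-a) * (a ^ n / n ! * exp a) := by gcongr; exact exp_sub_sum_range_le ha n
    _ = a ^ n / n ! := by rw [mul_left_comm, ← exp_add, neg_add_cancel, exp_zero, mul_one]

theorem Real.pow_div_factorial_le_exp_one_mul_div_pow {a : ℝ} (ha : 0 ≤ a) (m : ℕ) :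
    a ^ m / m ! ≤ (exp 1 * a / m) ^ m := by
  rcases m.eq_zero_or_pos with rfl | hm
  · simp
  have hm₀ : (m : ℝ) ≠ 0 := by positivity
  calc a ^ m / m ! = (a / m) ^ m * ((m : ℝ) ^ m / m !) := by
        rw [← mul_div_assoc, div_pow, div_mul_cancel₀ _ (pow_ne_zero m hm₀)]
    _ ≤ (a / m) ^ m * exp m := by gcongr; exact pow_div_factorial_le_exp _ m.cast_nonneg m
    _ = (exp 1 * a / m) ^ m := by rw [← exp_one_pow]; ring

theorem Real.one_sub_div_pow_le_exp_neg_mul_sum_range {a M : ℝ} (ha : 0 ≤ a) (haM : a ≤ M)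
    {N : ℕ} (hN : 0 < N) :
    1 - (exp 1 * M / N) ^ N ≤ exp (-a) * ∑ j ∈ range (N + 1), a ^ j / j ! := by
  by_cases hx : 1 ≤ exp 1 * M / N
  · have : 0 ≤ exp (-a) * ∑ j ∈ range (N + 1), a ^ j / j ! := by positivity
    linarith [one_le_pow₀ (n := N) hx]
  have hM₀ : 0 ≤ M := ha.trans haM
  have hx₀ : 0 ≤ exp 1 * M / N := by positivity
  have htail : a ^ (N + 1) / (N + 1)! ≤ (exp 1 * M / N) ^ N :=
    calc a ^ (N + 1) / (N + 1)! ≤ (exp 1 * a / (N + 1 : ℕ)) ^ (N + 1) :=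
          pow_div_factorial_le_exp_one_mul_div_pow ha (N + 1)
      _ ≤ (exp 1 * M / N) ^ (N + 1) := by
          gcongr
          exact N.le_succ
      _ ≤ (exp 1 * M / N) ^ N := pow_le_pow_of_le_one hx₀ (not_le.1 hx).le N.le_succ
  linarith [one_sub_exp_neg_mul_sum_range_le ha (N + 1)]

theorem tendsto_div_natCast_pow_self_atTop (c : ℝ) :
    Tendsto (fun k : ℕ ↦ (c / k) ^ k) atTop (𝓝 0) := by
  refine squeeze_zero_norm (fun k ↦ ?_) (FloorSemiring.tendsto_pow_div_factorial_atTop |c|)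
  rw [norm_pow, norm_div, Real.norm_eq_abs, RCLike.norm_natCast, div_pow]
  gcongr
  exact_mod_cast Nat.factorial_le_pow k

theorem tendsto_natCast_mul_div_log_pow_log (c : ℝ) {b : ℕ} (hb : 1 < b) :
    Tendsto (fun n : ℕ ↦ n * (c / Nat.log b n) ^ Nat.log b n) atTop (𝓝 0) := by
  have hlog : Tendsto (Nat.log b) atTop atTop :=
    Nat.log_monotone.tendsto_atTop_atTop fun k ↦ ⟨b ^ k, (Nat.log_pow hb k).ge⟩
  have hdom : Tendsto (fun n ↦ b * (b * |c| / Nat.log b n) ^ Nat.log b n) atTop (𝓝 0) := by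
    simpa using ((tendsto_div_natCast_pow_self_atTop (b * |c|)).comp hlog).const_mul (b : ℝ)
  refine squeeze_zero_norm (fun n ↦ ?_) hdom
  have hn : (n : ℝ) ≤ b ^ (Nat.log b n + 1) := by
    exact_mod_cast (Nat.lt_pow_succ_log_self hb n).le
  calc ‖n * (c / Nat.log b n) ^ Nat.log b n‖ = n * (|c| / Nat.log b n) ^ Nat.log b n := by
        simp only [norm_mul, norm_pow, norm_div, Real.norm_eq_abs, Nat.abs_cast]
    _ ≤ b ^ (Nat.log b n + 1) * (|c| / Nat.log b n) ^ Nat.log b n := by gcongr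
    _ = b * (b * |c| / Nat.log b n) ^ Nat.log b n := by rw [mul_div_assoc, mul_pow, pow_succ]; ring

/-- Lemma 2: for `α ∈ ℂ`, with `N_n = ⌊log₂ n⌋` and
`ε_n = (e · max{2, |α|²} / N_n)^{N_n}`, the truncated coherent-state weight
satisfies `e^{-|α|²} ∑_{j=0}^{N_n} |α|^{2j}/j! ≥ 1 - ε_n` for all `n ≥ 2`,
and `n · ε_n → 0`. -/
theorem coherent_state_projection_bound (α : ℂ) :
    (∀ n : ℕ, 2 ≤ n →
      1 - (Real.exp 1 * max 2 (‖α‖ ^ 2) / (Nat.log 2 n : ℝ)) ^ (Nat.log 2 n)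
        ≤ Real.exp (-(‖α‖ ^ 2)) *
            ∑ j ∈ Finset.range (Nat.log 2 n + 1),
              ‖α‖ ^ (2 * j) / (Nat.factorial j : ℝ))
    ∧ Tendsto
        (fun n : ℕ => (n : ℝ) *
          (Real.exp 1 * max 2 (‖α‖ ^ 2) / (Nat.log 2 n : ℝ)) ^ (Nat.log 2 n))
        atTop (nhds 0) := by
  refine ⟨fun n hn ↦ ?_, tendsto_natCast_mul_div_log_pow_log _ one_lt_two⟩
  simp_rw [pow_mul]
  exact one_sub_div_pow_le_exp_neg_mul_sum_range (by positivity) (le_max_right _ _)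
    (Nat.log_pos one_lt_two hn)
end

section
/- Let X ⊂ ℂ be a finite nonempty set. For n ≥ 2 and α ∈ ℂ define p_n(α) := e^{−|α|²} · ∑_{j=0}^{⌊log₂ n⌋} |α|^{2j} / j!. Then lim_{n→∞} min_{x : Fin n → X} ∏_{i=1}^{n} p_n(x_i) = 1; equivalently, for every δ > 0 there exists n₀ such that for all n ≥ n₀ and all sequences x₁,…,x_n with entries in X, one has ∏_{i=1}^{n} p_n(x_i) ≥ 1 − δ. -/
open BigOperators

/-- The truncated coherent-state weight
`p_n(α) = e^{-|α|²} ∑_{j=0}^{⌊log₂ n⌋} |α|^{2j}/j!`. -/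
noncomputable def truncWeight (n : ℕ) (α : ℂ) : ℝ :=
  Real.exp (-(‖α‖ ^ 2)) *
    ∑ j ∈ Finset.range (Nat.log 2 n + 1),
      ‖α‖ ^ (2 * j) / (Nat.factorial j : ℝ)

/-!
With `r = |α|²` and `m = ⌊log₂ n⌋`, the defect `1 - p_n(α) = e^{-r} ∑_{j > m} r^j / j!` is a
Poisson tail, hence at most `r^{m+1} / (m+1)!`. By the Weierstrass product inequality the defect
of the product is at most the sum of the defects, so at most `n C^{m+1} / (m+1)!` when `|α|² ≤ C`
on the alphabet. Since `n < 2^{m+1}`, this is bounded by `(2C)^{m+1} / (m+1)!`, which tends to `0`.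
-/

open Finset Nat

theorem Finset.one_sub_sum_le_prod_one_sub {ι R : Type*} [CommRing R] [PartialOrder R]
    [IsStrictOrderedRing R] (s : Finset ι) {f : ι → R}
    (h0 : ∀ i ∈ s, 0 ≤ f i) (h1 : ∀ i ∈ s, f i ≤ 1) :
    1 - ∑ i ∈ s, f i ≤ ∏ i ∈ s, (1 - f i) := by
  let : LinearOrder ι := IsWellOrder.linearOrder WellOrderingRel
  rw [prod_one_sub_ordered]
  gcongr with i hi
  refine mul_le_of_le_one_right (h0 i hi) (prod_le_one (fun j hj => ?_) fun j hj => ?_)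
  · exact sub_nonneg.2 (h1 j (mem_filter.1 hj).1)
  · exact sub_le_self _ (h0 j (mem_filter.1 hj).1)

theorem Real.exp_sub_sum_range_le_pow_div_factorial_mul_exp {r : ℝ} (hr : 0 ≤ r) (m : ℕ) :
    Real.exp r - ∑ j ∈ range m, r ^ j / j ! ≤ r ^ m / m ! * Real.exp r := by
  have hexp : HasSum (fun j => r ^ j / j !) (Real.exp r) := by
    rw [Real.exp_eq_exp_ℝ]
    exact NormedSpace.expSeries_div_hasSum_exp r
  refine hasSum_le (fun k => ?_) ((hasSum_nat_add_iff' m).2 hexp) (hexp.mul_left _)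
  have hfac : (m ! * k ! : ℝ) ≤ (k + m)! := by
    rw [add_comm]
    exact_mod_cast Nat.le_of_dvd (factorial_pos _) (factorial_mul_factorial_dvd_factorial_add m k)
  rw [_root_.div_mul_div_comm, ← pow_add, add_comm m]
  exact div_le_div_of_nonneg_left (by positivity) (by positivity) hfac

theorem truncWeight_eq (n : ℕ) (α : ℂ) :
    truncWeight n α =
      Real.exp (-(‖α‖ ^ 2)) * ∑ j ∈ range (log 2 n + 1), (‖α‖ ^ 2) ^ j / j ! := by
  simp only [truncWeight, pow_mul]

theorem truncWeight_nonneg (n : ℕ) (α : ℂ) : 0 ≤ truncWeight n α := by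
  unfold truncWeight
  positivity

theorem truncWeight_le_one (n : ℕ) (α : ℂ) : truncWeight n α ≤ 1 := by
  rw [truncWeight_eq, Real.exp_neg, inv_mul_le_one₀ (Real.exp_pos _)]
  exact Real.sum_le_exp_of_nonneg (by positivity) _

theorem one_sub_truncWeight_le (n : ℕ) (α : ℂ) :
    1 - truncWeight n α ≤ (‖α‖ ^ 2) ^ (log 2 n + 1) / (log 2 n + 1)! := by
  have htail := Real.exp_sub_sum_range_le_pow_div_factorial_mul_exp (sq_nonneg ‖α‖) (log 2 n + 1)
  rw [truncWeight_eq, Real.exp_neg, ← mul_le_mul_iff_of_pos_left (Real.exp_pos (‖α‖ ^ 2)),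
    mul_sub, mul_one, ← mul_assoc, mul_inv_cancel₀ (Real.exp_ne_zero _), one_mul]
  linarith

theorem sum_one_sub_truncWeight_le {n : ℕ} {C : ℝ} (hC : 0 ≤ C) {x : Fin n → ℂ}
    (hx : ∀ i, ‖x i‖ ^ 2 ≤ C) :
    ∑ i, (1 - truncWeight n (x i)) ≤ (2 * C) ^ (log 2 n + 1) / (log 2 n + 1)! := by
  have hn : (n : ℝ) ≤ 2 ^ (log 2 n + 1) := mod_cast (lt_pow_succ_log_self one_lt_two n).le
  calc ∑ i, (1 - truncWeight n (x i))
      ≤ ∑ _i : Fin n, (C ^ (log 2 n + 1) / (log 2 n + 1)! : ℝ) := by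
        gcongr with i
        refine (one_sub_truncWeight_le n (x i)).trans ?_
        gcongr
        exact hx i
    _ = n * (C ^ (log 2 n + 1) / (log 2 n + 1)!) := by simp
    _ ≤ 2 ^ (log 2 n + 1) * (C ^ (log 2 n + 1) / (log 2 n + 1)!) := by gcongr
    _ = (2 * C) ^ (log 2 n + 1) / (log 2 n + 1)! := by ring

theorem truncWeight_prod_uniform_convergence_general
    (X : Finset ℂ) :
    ∀ δ : ℝ, 0 < δ → ∃ n₀ : ℕ, ∀ n : ℕ, n₀ ≤ n →
      ∀ x : Fin n → ℂ, (∀ i, x i ∈ X) →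
        1 - δ ≤ ∏ i : Fin n, truncWeight n (x i) := by
  intro δ hδ
  set C := ∑ a ∈ X, ‖a‖ ^ 2
  have hC : 0 ≤ C := by positivity
  obtain ⟨M, hM⟩ := ((FloorSemiring.tendsto_pow_div_factorial_atTop (2 * C)).eventually
    (gt_mem_nhds hδ)).exists_forall_of_atTop
  refine ⟨2 ^ M, fun n hn x hx => ?_⟩
  have hMn : M < log 2 n + 1 := lt_succ_of_le (le_log_of_pow_le one_lt_two hn)
  have hsum := sum_one_sub_truncWeight_le hC
    (fun i => single_le_sum (f := fun a => ‖a‖ ^ 2) (fun _ _ => sq_nonneg _) (hx i))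
  calc 1 - δ ≤ 1 - ∑ i, (1 - truncWeight n (x i)) := by linarith [hM _ hMn.le]
    _ ≤ ∏ i, (1 - (1 - truncWeight n (x i))) :=
        one_sub_sum_le_prod_one_sub _ (fun i _ => sub_nonneg.2 (truncWeight_le_one n (x i)))
          fun i _ => sub_le_self _ (truncWeight_nonneg n (x i))
    _ = ∏ i, truncWeight n (x i) := by simp only [sub_sub_cancel]

/-- Lemma 3: for a finite nonempty alphabet `X ⊂ ℂ`, the overlap of any
length-`n` codeword with its projective approximation,
`∏ i, p_n(x i)`, converges to `1` uniformly over codewords: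
for every `δ > 0` there is `n₀` such that for every `n ≥ n₀` and every
sequence with entries in `X`, `∏ i, p_n(x i) ≥ 1 - δ`. -/
theorem truncWeight_prod_uniform_convergence
    (X : Finset ℂ) (hX : X.Nonempty) :
    ∀ δ : ℝ, 0 < δ → ∃ n₀ : ℕ, ∀ n : ℕ, n₀ ≤ n →
      ∀ x : Fin n → ℂ, (∀ i, x i ∈ X) →
        1 - δ ≤ ∏ i : Fin n, truncWeight n (x i) :=
  truncWeight_prod_uniform_convergence_general X
end

section
/- With g(x) := (x+1)·log₂(x+1) − x·log₂(x) for x > 0, the ratio log₂(1 + E) / g(E) tends to 0 as E → 0⁺. -/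
/-! As `E → 0⁺`, `log₂(1 + E) ≤ E / log 2` while `g(E) ≥ -E log₂ E`, so the ratio is squeezed
between `0` and `-1 / log E`, which tends to `0`. -/

open Filter

/-- The Gordon function `g(x) = (x+1) log₂(x+1) - x log₂ x`. -/
noncomputable def gordon (x : ℝ) : ℝ :=
  (x + 1) * Real.logb 2 (x + 1) - x * Real.logb 2 x

open Real

theorem neg_mul_logb_le_gordon {x : ℝ} (hx : 0 ≤ x) : -(x * logb 2 x) ≤ gordon x := by
  have : 0 ≤ (x + 1) * logb 2 (x + 1) :=
    mul_nonneg (by linarith) (logb_nonneg one_lt_two (by linarith))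
  unfold gordon
  linarith

theorem logb_one_add_le_div_log {b x : ℝ} (hb : 1 < b) (hx : -1 < x) :
    logb b (1 + x) ≤ x / log b :=
  div_le_div_of_nonneg_right (by linarith [log_le_sub_one_of_pos (by linarith : 0 < 1 + x)])
    (log_pos hb).le

theorem logb_one_add_div_gordon_mem_Icc {E : ℝ} (h0 : 0 < E) (h1 : E < 1) :
    logb 2 (1 + E) / gordon E ∈ Set.Icc 0 (-(log E)⁻¹) := by
  have hnum : 0 ≤ logb 2 (1 + E) := logb_nonneg one_lt_two (by linarith)
  have hlower : 0 < -(E * logb 2 E) := by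
    nlinarith [logb_neg one_lt_two h0 h1]
  have hden := neg_mul_logb_le_gordon h0.le
  refine ⟨div_nonneg hnum (hlower.trans_le hden).le, ?_⟩
  calc logb 2 (1 + E) / gordon E
      ≤ logb 2 (1 + E) / -(E * logb 2 E) := div_le_div_of_nonneg_left hnum hlower hden
    _ ≤ E / log 2 / -(E * logb 2 E) :=
        div_le_div_of_nonneg_right (logb_one_add_le_div_log one_lt_two (by linarith)) hlower.le
    _ = -(log E)⁻¹ := by
        have : log 2 ≠ 0 := (log_pos one_lt_two).ne'
        have : log E ≠ 0 := (log_neg h0 h1).ne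
        rw [logb]
        field_simp

/-- The ratio of the shot-noise-limited Shannon capacity to the Holevo
capacity of the pure-loss bosonic channel tends to `0` in the low
photon-number limit: `log₂(1+E)/g(E) → 0` as `E → 0⁺`. -/
theorem log_div_gordon_tendsto_zero :
    Tendsto (fun E : ℝ => Real.logb 2 (1 + E) / gordon E)
      (nhdsWithin 0 (Set.Ioi 0)) (nhds 0) := by
  have hupper : Tendsto (fun E : ℝ => -(log E)⁻¹) (nhdsWithin 0 (Set.Ioi 0)) (nhds 0) := by
    simpa using (tendsto_inv_atBot_zero.comp tendsto_log_nhdsGT_zero).neg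
  have hbounds : ∀ᶠ E in nhdsWithin 0 (Set.Ioi 0),
      logb 2 (1 + E) / gordon E ∈ Set.Icc 0 (-(log E)⁻¹) := by
    filter_upwards [Ioo_mem_nhdsGT one_pos] with E hE
    exact logb_one_add_div_gordon_mem_Icc hE.1 hE.2
  exact tendsto_of_tendsto_of_tendsto_of_le_of_le' tendsto_const_nhds hupper
    (hbounds.mono fun _ h => h.1) (hbounds.mono fun _ h => h.2)
end
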